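/- arXiv:2101.03372 — 4 statements merged into one kernel-verified Lean document; each statement's English description precedes it below -/
import Mathlib

section
/- Let a < b be reals, n ≥ 1 a natural number, h = (b−a)/(2n), k > 0, θ = k·h, and nodes x_r = a + r·h for r = 0,…,2n. Let ψ : ℝ → ℝ be a polynomial of degree at most 2. Then ∫_a^b sin(k·x)·ψ(x) dx = Filon_sin(ψ), i.e. Filon's sine quadrature formula is exact for quadratic polynomials. -/
/-!
Two integrations by parts give a closed-form primitive of `sin (k x) ψ x` for quadratic `ψ`.
On a panel `[m - h, m + h]`, both the exact integral and Filon's rule are linear combinations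
of `sin (k m)` and `cos (k m)` with coefficients in `ψ m`, `ψ' m`, `ψ''`, and comparing them
is an identity in `sin θ`, `cos θ` that needs `sin² θ + cos² θ = 1` only in the coefficient of
`sin (k m)`. Summing the `n` panels, the cosine end terms telescope and the sine end terms pair
up into the even-node sum.
-/

open Real Finset

/-- Filon's sine quadrature formula on `[a,b]` with `2n` equal subintervals. -/
noncomputable def filonSin (a b k : ℝ) (n : ℕ) (ψ : ℝ → ℝ) : ℝ :=
  let h : ℝ := (b - a) / (2 * n)
  let θ : ℝ := k * h
  let x : ℕ → ℝ := fun r => a + r * h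
  let α : ℝ := 1 / θ + Real.sin θ * Real.cos θ / θ ^ 2 - 2 * Real.sin θ ^ 2 / θ ^ 3
  let β : ℝ := 2 * ((1 + Real.cos θ ^ 2) / θ ^ 2 - 2 * Real.sin θ * Real.cos θ / θ ^ 3)
  let γ : ℝ := 4 * (Real.sin θ / θ ^ 3 - Real.cos θ / θ ^ 2)
  let Seven : ℝ := (∑ r ∈ Finset.range (n + 1), ψ (x (2 * r)) * Real.sin (k * x (2 * r)))
      - (ψ a * Real.sin (k * a) + ψ b * Real.sin (k * b)) / 2
  let Sodd : ℝ := ∑ r ∈ Finset.range n, ψ (x (2 * r + 1)) * Real.sin (k * x (2 * r + 1))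
  h * (α * (ψ a * Real.cos (k * a) - ψ b * Real.cos (k * b)) + β * Seven + γ * Sodd)

/-- Filon's cosine quadrature formula on `[a,b]` with `2n` equal subintervals. -/
noncomputable def filonCos (a b k : ℝ) (n : ℕ) (ψ : ℝ → ℝ) : ℝ :=
  let h : ℝ := (b - a) / (2 * n)
  let θ : ℝ := k * h
  let x : ℕ → ℝ := fun r => a + r * h
  let α : ℝ := 1 / θ + Real.sin θ * Real.cos θ / θ ^ 2 - 2 * Real.sin θ ^ 2 / θ ^ 3
  let β : ℝ := 2 * ((1 + Real.cos θ ^ 2) / θ ^ 2 - 2 * Real.sin θ * Real.cos θ / θ ^ 3)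
  let γ : ℝ := 4 * (Real.sin θ / θ ^ 3 - Real.cos θ / θ ^ 2)
  let Ceven : ℝ := (∑ r ∈ Finset.range (n + 1), ψ (x (2 * r)) * Real.cos (k * x (2 * r)))
      - (ψ a * Real.cos (k * a) + ψ b * Real.cos (k * b)) / 2
  let Codd : ℝ := ∑ r ∈ Finset.range n, ψ (x (2 * r + 1)) * Real.cos (k * x (2 * r + 1))
  h * (α * (ψ b * Real.sin (k * b) - ψ a * Real.sin (k * a)) + β * Ceven + γ * Codd)

theorem hasDerivAt_sin_mul_quadratic_primitive {k : ℝ} (hk : k ≠ 0) (c0 c1 c2 x : ℝ) :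
    HasDerivAt
      (fun x => (2 * c2 / k ^ 3 - (c2 * x ^ 2 + c1 * x + c0) / k) * cos (k * x)
        + (2 * c2 * x + c1) / k ^ 2 * sin (k * x))
      (sin (k * x) * (c2 * x ^ 2 + c1 * x + c0)) x := by
  have hkx : HasDerivAt (fun x => k * x) k x := by simpa using (hasDerivAt_id x).const_mul k
  have hcos := (hasDerivAt_cos (k * x)).comp x hkx
  have hsin := (hasDerivAt_sin (k * x)).comp x hkx
  have hq : HasDerivAt (fun x => c2 * x ^ 2 + c1 * x + c0) (2 * c2 * x + c1) x := by
    refine ((((hasDerivAt_pow 2 x).const_mul c2).add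
      ((hasDerivAt_id x).const_mul c1)).add_const c0).congr_deriv ?_
    simp only [Nat.cast_ofNat]
    ring
  have hl : HasDerivAt (fun x => 2 * c2 * x + c1) (2 * c2) x := by
    simpa using ((hasDerivAt_id x).const_mul (2 * c2)).add_const c1
  refine ((((hq.div_const k).const_sub (2 * c2 / k ^ 3)).mul hcos).add
    ((hl.div_const (k ^ 2)).mul hsin)).congr_deriv ?_
  simp only [Function.comp]
  field_simp
  ring

noncomputable def filonAlpha (θ : ℝ) : ℝ :=
  1 / θ + sin θ * cos θ / θ ^ 2 - 2 * sin θ ^ 2 / θ ^ 3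

noncomputable def filonBeta (θ : ℝ) : ℝ :=
  2 * ((1 + cos θ ^ 2) / θ ^ 2 - 2 * sin θ * cos θ / θ ^ 3)

noncomputable def filonGamma (θ : ℝ) : ℝ :=
  4 * (sin θ / θ ^ 3 - cos θ / θ ^ 2)

noncomputable def filonSinPanel (k h : ℝ) (ψ : ℝ → ℝ) (c : ℝ) : ℝ :=
  h * (filonAlpha (k * h) * (ψ c * cos (k * c) - ψ (c + 2 * h) * cos (k * (c + 2 * h)))
    + filonBeta (k * h) * ((ψ c * sin (k * c) + ψ (c + 2 * h) * sin (k * (c + 2 * h))) / 2)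
    + filonGamma (k * h) * (ψ (c + h) * sin (k * (c + h))))

theorem integral_sin_mul_quadratic_eq_filonSinPanel {k h c0 c1 c2 : ℝ} {ψ : ℝ → ℝ}
    (hk : k ≠ 0) (hh : h ≠ 0) (hψ : ∀ x, ψ x = c2 * x ^ 2 + c1 * x + c0) (c : ℝ) :
    ∫ x in c..c + 2 * h, sin (k * x) * ψ x = filonSinPanel k h ψ c := by
  simp only [hψ, filonSinPanel, filonAlpha, filonBeta, filonGamma]
  rw [intervalIntegral.integral_eq_sub_of_hasDerivAt
    (fun x _ => hasDerivAt_sin_mul_quadratic_primitive hk c0 c1 c2 x)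
    (Continuous.intervalIntegrable (by fun_prop) _ _)]
  obtain ⟨m, rfl⟩ : ∃ m, c = m - h := ⟨c + h, by ring⟩
  have hl : k * (m - h) = k * m - k * h := by ring
  have hr : k * (m - h + 2 * h) = k * m + k * h := by ring
  have hc : k * (m - h + h) = k * m := by ring
  simp only [hl, hr, hc, sin_add, sin_sub, cos_add, cos_sub]
  have hst := sin_sq_add_cos_sq (k * h)
  linear_combination (norm := skip) (-h * (c2 * m ^ 2 + c1 * m + c0 + c2 * h ^ 2) * sin (k * m)
    * (2 * cos (k * h) / (k * h) ^ 2 - 4 * sin (k * h) / (k * h) ^ 3)) * hst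
  field_simp
  ring

theorem sum_range_filon_panels (α β γ : ℝ) (fc fs : ℕ → ℝ) (n : ℕ) :
    ∑ r ∈ range n, (α * (fc (2 * r) - fc (2 * r + 2))
        + β * ((fs (2 * r) + fs (2 * r + 2)) / 2) + γ * fs (2 * r + 1))
      = α * (fc 0 - fc (2 * n)) + β * (∑ r ∈ range (n + 1), fs (2 * r) - (fs 0 + fs (2 * n)) / 2)
        + γ * ∑ r ∈ range n, fs (2 * r + 1) := by
  induction n with
  | zero => simp
  | succ n ih =>
    rw [sum_range_succ, ih, sum_range_succ (fun r => fs (2 * r)) (n + 1),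
      sum_range_succ (fun r => fs (2 * r + 1)) n, mul_add_one]
    ring

theorem filonSin_eq_sum_filonSinPanel (a b k : ℝ) {n : ℕ} (hn : n ≠ 0) (ψ : ℝ → ℝ) :
    filonSin a b k n ψ
      = ∑ r ∈ range n, filonSinPanel k ((b - a) / (2 * n)) ψ (a + 2 * r * ((b - a) / (2 * n))) := by
  simp only [filonSin]
  set h := (b - a) / (2 * n) with hh
  have hb : a + ((2 * n : ℕ) : ℝ) * h = b := by
    rw [hh]; field_simp; push_cast; ring
  set fc : ℕ → ℝ := fun j => ψ (a + j * h) * cos (k * (a + j * h))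
  set fs : ℕ → ℝ := fun j => ψ (a + j * h) * sin (k * (a + j * h))
  have hpanel : ∀ r : ℕ, filonSinPanel k h ψ (a + 2 * r * h)
      = h * (filonAlpha (k * h) * (fc (2 * r) - fc (2 * r + 2))
        + filonBeta (k * h) * ((fs (2 * r) + fs (2 * r + 2)) / 2)
        + filonGamma (k * h) * fs (2 * r + 1)) := by
    intro r
    simp only [filonSinPanel, fc, fs]
    push_cast
    ring_nf
  rw [sum_congr rfl fun r _ => hpanel r, ← mul_sum, sum_range_filon_panels]
  simp only [filonAlpha, filonBeta, filonGamma, fc, fs, hb, Nat.cast_zero, zero_mul,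
    add_zero]

theorem filonSin_exact_on_quadratics
    (a b k : ℝ) (hab : a < b) (hk : 0 < k) (n : ℕ) (hn : 1 ≤ n)
    (ψ : ℝ → ℝ) (hψ : ∃ c0 c1 c2 : ℝ, ∀ x : ℝ, ψ x = c2 * x ^ 2 + c1 * x + c0) :
    (∫ x in a..b, Real.sin (k * x) * ψ x) = filonSin a b k n ψ := by
  obtain ⟨c0, c1, c2, hψ⟩ := hψ
  have hn0 : n ≠ 0 := Nat.one_le_iff_ne_zero.mp hn
  rw [filonSin_eq_sum_filonSinPanel a b k hn0]
  set h := (b - a) / (2 * n) with hh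
  have hh0 : h ≠ 0 := (div_pos (sub_pos.2 hab) (by positivity)).ne'
  have hnode : ∀ r : ℕ, a + 2 * ((r + 1 : ℕ) : ℝ) * h = a + 2 * r * h + 2 * h := by
    intro r; push_cast; ring
  have hb : a + 2 * (n : ℝ) * h = b := by rw [hh]; field_simp; ring
  have hint : Continuous fun x => sin (k * x) * ψ x := by
    simp only [hψ]; fun_prop
  calc ∫ x in a..b, sin (k * x) * ψ x
      = ∑ r ∈ range n, ∫ x in a + 2 * r * h..a + 2 * r * h + 2 * h, sin (k * x) * ψ x := by
        simp only [← hnode]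
        rw [intervalIntegral.sum_integral_adjacent_intervals fun _ _ => hint.intervalIntegrable _ _]
        simp only [Nat.cast_zero, mul_zero, zero_mul, add_zero, hb]
    _ = ∑ r ∈ range n, filonSinPanel k h ψ (a + 2 * r * h) :=
        sum_congr rfl fun r _ => integral_sin_mul_quadratic_eq_filonSinPanel hk.ne' hh0 hψ _
end

section
/- Let a < b be reals, n ≥ 1 a natural number, h = (b−a)/(2n), k > 0, θ = k·h, and nodes x_r = a + r·h for r = 0,…,2n. Let ψ : ℝ → ℝ be a polynomial of degree at most 2. Then ∫_a^b cos(k·x)·ψ(x) dx = Filon_cos(ψ), i.e. Filon's cosine quadrature formula is exact for quadratic polynomials. -/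
open Real Finset

noncomputable def filonCosPanel (k h : ℝ) (ψ : ℝ → ℝ) (m : ℝ) : ℝ :=
  h * (filonAlpha (k * h) * (ψ (m + h) * sin (k * (m + h)) - ψ (m - h) * sin (k * (m - h)))
    + filonBeta (k * h) * ((ψ (m - h) * cos (k * (m - h)) + ψ (m + h) * cos (k * (m + h))) / 2)
    + filonGamma (k * h) * (ψ m * cos (k * m)))

theorem filonAlpha_mul_sin_add_filonBeta_mul_cos (θ : ℝ) :
    2 * filonAlpha θ * sin θ + filonBeta θ * cos θ
      = 2 * sin θ / θ + 4 * cos θ / θ ^ 2 - 4 * sin θ / θ ^ 3 := by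
  unfold filonAlpha filonBeta
  linear_combination (2 * cos θ / θ ^ 2 - 4 * sin θ / θ ^ 3) * sin_sq_add_cos_sq θ

theorem hasDerivAt_cos_mul_quadratic_antideriv {k : ℝ} (hk : k ≠ 0) (c₀ c₁ c₂ x : ℝ) :
    HasDerivAt
      (fun x => ((c₂ * (k ^ 2 * x ^ 2 - 2) + c₁ * k ^ 2 * x + c₀ * k ^ 2) * sin (k * x)
        + (2 * c₂ * k * x + c₁ * k) * cos (k * x)) / k ^ 3)
      (cos (k * x) * (c₂ * x ^ 2 + c₁ * x + c₀)) x := by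
  have hkx : HasDerivAt (fun x => k * x) k x := by simpa using (hasDerivAt_id x).const_mul k
  have hp : HasDerivAt (fun x => c₂ * (k ^ 2 * x ^ 2 - 2) + c₁ * k ^ 2 * x + c₀ * k ^ 2)
      (c₂ * (k ^ 2 * (2 * x)) + c₁ * k ^ 2) x := by
    simpa using (((((hasDerivAt_pow 2 x).const_mul (k ^ 2)).sub_const 2).const_mul c₂).add
      ((hasDerivAt_id x).const_mul (c₁ * k ^ 2))).add_const (c₀ * k ^ 2)
  have hq : HasDerivAt (fun x => 2 * c₂ * k * x + c₁ * k) (2 * c₂ * k) x := by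
    simpa using ((hasDerivAt_id x).const_mul (2 * c₂ * k)).add_const (c₁ * k)
  refine (((hp.mul hkx.sin).add (hq.mul hkx.cos)).div_const (k ^ 3)).congr_deriv ?_
  field_simp
  ring

theorem integral_cos_mul_quadratic_eq_filonCosPanel {k : ℝ} (hk : k ≠ 0) (h m c₀ c₁ c₂ : ℝ) :
    ∫ x in m - h..m + h, cos (k * x) * (c₂ * x ^ 2 + c₁ * x + c₀) =
      filonCosPanel k h (fun x => c₂ * x ^ 2 + c₁ * x + c₀) m := by
  rcases eq_or_ne h 0 with rfl | hh
  · simp [filonCosPanel]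
  rw [intervalIntegral.integral_eq_sub_of_hasDerivAt
    (fun x _ => hasDerivAt_cos_mul_quadratic_antideriv hk c₀ c₁ c₂ x)
    (by apply Continuous.intervalIntegrable; fun_prop)]
  have hsin_add : sin (k * (m + h)) = sin (k * m) * cos (k * h) + cos (k * m) * sin (k * h) := by
    rw [mul_add, sin_add]
  have hsin_sub : sin (k * (m - h)) = sin (k * m) * cos (k * h) - cos (k * m) * sin (k * h) := by
    rw [mul_sub, sin_sub]
  have hcos_add : cos (k * (m + h)) = cos (k * m) * cos (k * h) - sin (k * m) * sin (k * h) := by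
    rw [mul_add, cos_add]
  have hcos_sub : cos (k * (m - h)) = cos (k * m) * cos (k * h) + sin (k * m) * sin (k * h) := by
    rw [mul_sub, cos_sub]
  simp only [filonCosPanel, hsin_add, hsin_sub, hcos_add, hcos_sub]
  -- `c₂ m² + c₁ m + c₀ + c₂ h²` is the even part `A` of `p (m ± h) = A ± B`
  linear_combination (norm := skip) (-(h * cos (k * m) * (c₂ * m ^ 2 + c₁ * m + c₀ + c₂ * h ^ 2)))
    * filonAlpha_mul_sin_add_filonBeta_mul_cos (k * h)
  unfold filonAlpha filonBeta filonGamma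
  field_simp
  ring

theorem sum_range_add_succ_div_two {K : Type*} [Field K] [CharZero K] (f : ℕ → K) (n : ℕ) :
    ∑ i ∈ range n, (f i + f (i + 1)) / 2 = ∑ i ∈ range (n + 1), f i - (f 0 + f n) / 2 := by
  induction n with
  | zero => simp
  | succ n ih => rw [sum_range_succ, ih, sum_range_succ _ (n + 1)]; ring

theorem filonCos_eq_sum_filonCosPanel (a b k : ℝ) {n : ℕ} (hn : n ≠ 0) (ψ : ℝ → ℝ) :
    filonCos a b k n ψ = ∑ i ∈ range n,
      filonCosPanel k ((b - a) / (2 * n)) ψ (a + (2 * i + 1) * ((b - a) / (2 * n))) := by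
  have hb : a + ((2 * n : ℕ) : ℝ) * ((b - a) / (2 * n)) = b := by
    push_cast
    field_simp
    ring
  simp only [filonCos]
  generalize (b - a) / (2 * n) = h at hb ⊢
  subst hb
  obtain ⟨g, hg⟩ : ∃ g : ℕ → ℝ, ∀ j : ℕ, g j = ψ (a + j * h) * cos (k * (a + j * h)) :=
    ⟨_, fun _ => rfl⟩
  obtain ⟨G, hG⟩ : ∃ G : ℕ → ℝ, ∀ j : ℕ, G j = ψ (a + j * h) * sin (k * (a + j * h)) :=
    ⟨_, fun _ => rfl⟩
  have hpanel (i : ℕ) : filonCosPanel k h ψ (a + (2 * i + 1) * h) =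
      h * (filonAlpha (k * h) * (G (2 * (i + 1)) - G (2 * i))
        + filonBeta (k * h) * ((g (2 * i) + g (2 * (i + 1))) / 2)
        + filonGamma (k * h) * g (2 * i + 1)) := by
    have hnext : a + (2 * i + 1) * h + h = a + ((2 * (i + 1) : ℕ) : ℝ) * h := by push_cast; ring
    have hprev : a + (2 * i + 1) * h - h = a + ((2 * i : ℕ) : ℝ) * h := by push_cast; ring
    have hmid : a + (2 * i + 1) * h = a + ((2 * i + 1 : ℕ) : ℝ) * h := by push_cast; ring
    rw [filonCosPanel, hnext, hprev, hmid, hg, hg, hg, hG, hG]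
  rw [sum_congr rfl fun i _ => hpanel i, ← mul_sum, sum_add_distrib, sum_add_distrib,
    ← mul_sum, ← mul_sum, ← mul_sum, sum_range_sub (fun i => G (2 * i)),
    sum_range_add_succ_div_two (fun i => g (2 * i))]
  simp only [← hg, ← hG, mul_zero, hg 0, hG 0, Nat.cast_zero, zero_mul, add_zero]
  rfl

theorem filonCos_exact_on_quadratics_general
    (a b k : ℝ) (hk : 0 < k) (n : ℕ) (hn : 1 ≤ n)
    (ψ : ℝ → ℝ) (hψ : ∃ c0 c1 c2 : ℝ, ∀ x : ℝ, ψ x = c2 * x ^ 2 + c1 * x + c0) :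
    (∫ x in a..b, Real.cos (k * x) * ψ x) = filonCos a b k n ψ := by
  obtain ⟨c0, c1, c2, hψ⟩ := hψ
  obtain rfl : ψ = fun x => c2 * x ^ 2 + c1 * x + c0 := funext hψ
  rw [filonCos_eq_sum_filonCosPanel a b k (by omega)]
  set h := (b - a) / (2 * n) with hh
  have hb : a + n * (2 * h) = b := by rw [hh]; field_simp; ring
  have hf : Continuous fun x => cos (k * x) * (c2 * x ^ 2 + c1 * x + c0) := by fun_prop
  have hsplit := intervalIntegral.sum_integral_adjacent_intervals (μ := MeasureTheory.volume)
    (a := fun i : ℕ => a + i * (2 * h)) (n := n) fun _ _ => hf.intervalIntegrable _ _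
  simp only [Nat.cast_zero, zero_mul, add_zero, hb] at hsplit
  rw [← hsplit]
  refine sum_congr rfl fun i _ => ?_
  rw [← integral_cos_mul_quadratic_eq_filonCosPanel hk.ne']
  congr 1 <;> push_cast <;> ring

theorem filonCos_exact_on_quadratics
    (a b k : ℝ) (hab : a < b) (hk : 0 < k) (n : ℕ) (hn : 1 ≤ n)
    (ψ : ℝ → ℝ) (hψ : ∃ c0 c1 c2 : ℝ, ∀ x : ℝ, ψ x = c2 * x ^ 2 + c1 * x + c0) :
    (∫ x in a..b, Real.cos (k * x) * ψ x) = filonCos a b k n ψ :=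
  filonCos_exact_on_quadratics_general a b k hk n hn ψ hψ
end

section
/- Let ω > 0, let g : ℝ → ℝ be continuous, let x : ℝ → ℝ be twice continuously differentiable with x''(t) = −ω²·x(t) + g(t) for all t, let h > 0 with grid points tₙ = n·h, and fix n ≥ 1 with T = n·h. For 0 ≤ j ≤ n−1 set I^S_j = ∫_{t_{n−j−1}}^{t_{n−j}} sin((t_{n−j}−s)ω)·g(s) ds and I^C_j = ∫_{t_{n−j−1}}^{t_{n−j}} cos((t_{n−j}−s)ω)·g(s) ds, and let Q^S_j, Q^C_j be real numbers (quadrature approximations) satisfying |Q^S_j − I^S_j| ≤ δ_j·h and |Q^C_j − I^C_j| ≤ δ_j·h, with δ = max_{0≤j≤n−1} δ_j. Define the numerical position Xₙ = cos(nhω)·x(0) + ω⁻¹·sin(nhω)·x'(0) + ω⁻¹·Σ_{j=0}^{n−1} [ cos(jhω)·Q^S_j + sin(jhω)·Q^C_j ]. Then |Xₙ − x(tₙ)| ≤ 2·ω⁻¹·δ·T. -/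
/-!
The scheme discretises the exact variation-of-constants formula
`x(tₙ) = cos(tₙω) x(0) + ω⁻¹ sin(tₙω) x'(0) + ω⁻¹ ∫₀^{tₙ} sin((tₙ - s)ω) g(s) ds`
with the convolution integral split over the grid cells: on the cell ending at `t_{n-j}`,
`sin((tₙ - s)ω) = cos(jhω) sin((t_{n-j} - s)ω) + sin(jhω) cos((t_{n-j} - s)ω)`.
Hence `Xₙ - x(tₙ)` is `ω⁻¹` times a sum of `n` terms, each bounded by `2δh`.
-/

open Real intervalIntegral Finset

theorem harmonic_oscillator_variation_of_constants {ω : ℝ} (hω : ω ≠ 0) {g x : ℝ → ℝ}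
    (hg : Continuous g) (hx : Differentiable ℝ x) (hx' : Differentiable ℝ (deriv x))
    (hode : ∀ t, deriv (deriv x) t = -ω ^ 2 * x t + g t) (T : ℝ) :
    x T = cos (T * ω) * x 0 + ω⁻¹ * sin (T * ω) * deriv x 0
      + ω⁻¹ * ∫ s in (0 : ℝ)..T, sin ((T - s) * ω) * g s := by
  -- `s ↦ sin((T - s)ω) x'(s) + ω cos((T - s)ω) x(s)` is a primitive of the integrand.
  have hprim : ∀ s, HasDerivAt (fun s => sin ((T - s) * ω) * deriv x s
      + ω * (cos ((T - s) * ω) * x s)) (sin ((T - s) * ω) * g s) s := by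
    intro s
    have harg : HasDerivAt (fun s : ℝ => (T - s) * ω) (-1 * ω) s :=
      ((hasDerivAt_id s).const_sub T).mul_const ω
    have hsin := ((hasDerivAt_sin _).comp s harg).mul (hx' s).hasDerivAt
    have hcos := (((hasDerivAt_cos _).comp s harg).mul (hx s).hasDerivAt).const_mul ω
    refine (hsin.add hcos).congr_deriv ?_
    simp only [Function.comp_apply, hode]
    ring
  have hftc := integral_eq_sub_of_hasDerivAt (a := 0) (b := T) (fun s _ => hprim s)
    ((by fun_prop : Continuous fun s => sin ((T - s) * ω) * g s).intervalIntegrable 0 T)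
  simp only [sub_self, zero_mul, sin_zero, cos_zero, sub_zero, one_mul] at hftc
  rw [hftc]
  field_simp
  ring

theorem integral_sin_mul_eq_of_add_eq {ω : ℝ} {g : ℝ → ℝ} (hg : Continuous g)
    {a b c T : ℝ} (hT : c + b = T) :
    ∫ s in a..b, sin ((T - s) * ω) * g s
      = cos (c * ω) * (∫ s in a..b, sin ((b - s) * ω) * g s)
        + sin (c * ω) * ∫ s in a..b, cos ((b - s) * ω) * g s := by
  rw [← integral_const_mul, ← integral_const_mul,
    ← integral_add (Continuous.intervalIntegrable (by fun_prop) _ _)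
      (Continuous.intervalIntegrable (by fun_prop) _ _)]
  refine integral_congr fun s _ => ?_
  simp only [← hT, show (c + b - s) * ω = c * ω + (b - s) * ω by ring, sin_add]
  ring

theorem sum_integral_adjacent_intervals_reflect {E : Type*} [NormedAddCommGroup E]
    [NormedSpace ℝ E] {f : ℝ → E} {a : ℕ → ℝ} {n : ℕ}
    (hf : ∀ k < n, IntervalIntegrable f MeasureTheory.volume (a k) (a (k + 1))) :
    ∑ j ∈ range n, ∫ s in a (n - j - 1)..a (n - j), f s = ∫ s in a 0..a n, f s := by
  rw [← sum_integral_adjacent_intervals hf,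
    ← sum_range_reflect (fun k => ∫ s in a k..a (k + 1), f s) n]
  refine sum_congr rfl fun j hj => ?_
  have hj := mem_range.mp hj
  rw [show n - 1 - j = n - j - 1 by omega, show n - j - 1 + 1 = n - j by omega]

theorem abs_sum_cos_mul_add_sin_mul_le {θ e f : ℕ → ℝ} {n : ℕ} {ε : ℝ}
    (he : ∀ j < n, |e j| ≤ ε) (hf : ∀ j < n, |f j| ≤ ε) :
    |∑ j ∈ range n, (cos (θ j) * e j + sin (θ j) * f j)| ≤ 2 * n * ε := by
  have hterm : ∀ j ∈ range n, |cos (θ j) * e j + sin (θ j) * f j| ≤ 2 * ε := by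
    intro j hj
    have hj := mem_range.mp hj
    calc |cos (θ j) * e j + sin (θ j) * f j|
        ≤ |cos (θ j)| * |e j| + |sin (θ j)| * |f j| := by
          rw [← abs_mul, ← abs_mul]; exact abs_add_le _ _
      _ ≤ 1 * ε + 1 * ε := by
          gcongr
          exacts [abs_cos_le_one _, he j hj, abs_sin_le_one _, hf j hj]
      _ = 2 * ε := by ring
  calc |∑ j ∈ range n, (cos (θ j) * e j + sin (θ j) * f j)|
      ≤ ∑ j ∈ range n, |cos (θ j) * e j + sin (θ j) * f j| := abs_sum_le_sum_abs _ _
    _ ≤ ∑ _j ∈ range n, 2 * ε := sum_le_sum hterm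
    _ = 2 * n * ε := by rw [sum_const, card_range, nsmul_eq_mul]; ring

theorem trig_scheme_position_error_bound
    (ω : ℝ) (hω : 0 < ω) (g : ℝ → ℝ) (hg : Continuous g)
    (x : ℝ → ℝ) (hx : ContDiff ℝ 2 x)
    (hode : ∀ t : ℝ, deriv (deriv x) t = -ω ^ 2 * x t + g t)
    (h : ℝ) (hh : 0 < h) (t : ℕ → ℝ) (ht : ∀ m : ℕ, t m = m * h)
    (n : ℕ) (hn : 1 ≤ n) (T : ℝ) (hT : T = n * h)
    (QS QC δj : ℕ → ℝ)
    (hQS : ∀ j : ℕ, j < n →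
      |QS j - ∫ s in (t (n - j - 1))..(t (n - j)), Real.sin ((t (n - j) - s) * ω) * g s|
        ≤ δj j * h)
    (hQC : ∀ j : ℕ, j < n →
      |QC j - ∫ s in (t (n - j - 1))..(t (n - j)), Real.cos ((t (n - j) - s) * ω) * g s|
        ≤ δj j * h)
    (δ : ℝ)
    (hδ : δ = (Finset.range n).sup'
      (Finset.nonempty_range_iff.mpr (Nat.one_le_iff_ne_zero.mp hn)) δj)
    (X : ℝ)
    (hX : X = Real.cos (n * h * ω) * x 0 + ω⁻¹ * Real.sin (n * h * ω) * deriv x 0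
      + ω⁻¹ * ∑ j ∈ Finset.range n,
          (Real.cos (j * h * ω) * QS j + Real.sin (j * h * ω) * QC j)) :
    |X - x (t n)| ≤ 2 * ω⁻¹ * δ * T := by
  set IS : ℕ → ℝ := fun j => ∫ s in t (n - j - 1)..t (n - j), sin ((t (n - j) - s) * ω) * g s
  set IC : ℕ → ℝ := fun j => ∫ s in t (n - j - 1)..t (n - j), cos ((t (n - j) - s) * ω) * g s
  have hsol := harmonic_oscillator_variation_of_constants hω.ne' hg (hx.differentiable two_ne_zero)
    hx.differentiable_deriv_two hode (t n)
  have hconv : ∑ j ∈ range n, (cos (j * h * ω) * IS j + sin (j * h * ω) * IC j)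
      = ∫ s in (0 : ℝ)..t n, sin ((t n - s) * ω) * g s := by
    rw [show (0 : ℝ) = t 0 by simp [ht], ← sum_integral_adjacent_intervals_reflect
      fun _ _ => Continuous.intervalIntegrable (by fun_prop) _ _]
    refine sum_congr rfl fun j hj => (integral_sin_mul_eq_of_add_eq hg ?_).symm
    have hj := mem_range.mp hj
    simp only [ht, Nat.cast_sub hj.le]
    ring
  have herr : X - x (t n) = ω⁻¹ * ∑ j ∈ range n,
      (cos (j * h * ω) * (QS j - IS j) + sin (j * h * ω) * (QC j - IC j)) := by
    rw [hX, hsol, ← hconv, ht n]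
    simp only [mul_sub, add_sub_add_comm, sum_sub_distrib, sum_add_distrib]
    ring
  have hδj : ∀ j < n, δj j * h ≤ δ * h := fun j hj =>
    mul_le_mul_of_nonneg_right (hδ ▸ le_sup' δj (mem_range.mpr hj)) hh.le
  rw [herr, abs_mul, abs_of_pos (inv_pos.mpr hω), hT]
  calc ω⁻¹ * |_| ≤ ω⁻¹ * (2 * n * (δ * h)) := by
        gcongr
        exact abs_sum_cos_mul_add_sin_mul_le (fun j hj => (hQS j hj).trans (hδj j hj))
          fun j hj => (hQC j hj).trans (hδj j hj)
    _ = 2 * ω⁻¹ * δ * (n * h) := by ring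
end

section
/- Let ω > 0, let g : ℝ → ℝ be continuous, let x : ℝ → ℝ be twice continuously differentiable with x''(t) = −ω²·x(t) + g(t) for all t, let h > 0 with grid points tₙ = n·h, and fix n ≥ 1 with T = n·h. For 0 ≤ j ≤ n−1 set I^S_j = ∫_{t_{n−j−1}}^{t_{n−j}} sin((t_{n−j}−s)ω)·g(s) ds and I^C_j = ∫_{t_{n−j−1}}^{t_{n−j}} cos((t_{n−j}−s)ω)·g(s) ds, and let Q^S_j, Q^C_j be real numbers (quadrature approximations) satisfying |Q^S_j − I^S_j| ≤ δ_j·h and |Q^C_j − I^C_j| ≤ δ_j·h, with δ = max_{0≤j≤n−1} δ_j. Define the numerical velocity Vₙ = −ω·sin(nhω)·x(0) + cos(nhω)·x'(0) + Σ_{j=0}^{n−1} [ −sin(jhω)·Q^S_j + cos(jhω)·Q^C_j ]. Then |Vₙ − x'(tₙ)| ≤ 2·δ·T. -/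
open Real intervalIntegral Finset

/-!
Differentiating `s ↦ cos((b - s)ω) x'(s) - ω sin((b - s)ω) x(s)` and using the ODE gives the
variation-of-constants formula `x'(b) = -ω sin((b - a)ω) x(a) + cos((b - a)ω) x'(a) +
∫_a^b cos((b - s)ω) g(s) ds`. Splitting `[0, tₙ]` into the grid cells and applying the angle
addition formula at the cell endpoint `t_{n-j}`, the integral becomes
`Σⱼ (cos(jhω) I^C_j - sin(jhω) I^S_j)`, so the exact velocity is the scheme with the exact
convolution integrals in place of the quadratures. The error is therefore
`Σⱼ (-sin(jhω) (Q^S_j - I^S_j) + cos(jhω) (Q^C_j - I^C_j))`, and each of the `n` terms is at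
most `2δh` in absolute value.
-/

theorem abs_neg_sin_mul_add_cos_mul_le (θ u v : ℝ) :
    |-sin θ * u + cos θ * v| ≤ |u| + |v| :=
  calc |-sin θ * u + cos θ * v|
      ≤ |sin θ| * |u| + |cos θ| * |v| := by
        simpa only [abs_mul, abs_neg] using abs_add_le (-sin θ * u) (cos θ * v)
    _ ≤ 1 * |u| + 1 * |v| := by
        gcongr
        exacts [abs_sin_le_one θ, abs_cos_le_one θ]
    _ = |u| + |v| := by ring

section Convolution

variable {g : ℝ → ℝ} (ω : ℝ)

theorem integral_cos_sub_mul_eq {a b : ℝ} (hg : IntervalIntegrable g MeasureTheory.volume a b)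
    (c : ℝ) :
    ∫ s in a..b, cos ((c - s) * ω) * g s =
      cos ((c - b) * ω) * (∫ s in a..b, cos ((b - s) * ω) * g s)
        - sin ((c - b) * ω) * ∫ s in a..b, sin ((b - s) * ω) * g s := by
  rw [← integral_const_mul, ← integral_const_mul, ← integral_sub
    ((hg.continuousOn_mul (by fun_prop)).const_mul _)
    ((hg.continuousOn_mul (by fun_prop)).const_mul _)]
  refine integral_congr fun s _ => ?_
  have hangle : (c - s) * ω = (c - b) * ω + (b - s) * ω := by ring
  simp only [hangle, cos_add]
  ring

theorem integral_cos_sub_mul_eq_sum_adjacent (t : ℕ → ℝ) (n : ℕ)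
    (hg : ∀ k < n, IntervalIntegrable g MeasureTheory.volume (t k) (t (k + 1))) :
    ∫ s in t 0..t n, cos ((t n - s) * ω) * g s =
      ∑ k ∈ range n,
        (cos ((t n - t (k + 1)) * ω) *
            (∫ s in t k..t (k + 1), cos ((t (k + 1) - s) * ω) * g s)
          - sin ((t n - t (k + 1)) * ω) *
            ∫ s in t k..t (k + 1), sin ((t (k + 1) - s) * ω) * g s) := by
  rw [← sum_integral_adjacent_intervals fun k hk => (hg k hk).continuousOn_mul (by fun_prop)]
  exact sum_congr rfl fun k hk => integral_cos_sub_mul_eq ω (hg k (mem_range.mp hk)) (t n)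

theorem integral_cos_sub_mul_eq_sum_grid (hg : Continuous g) (h : ℝ) (t : ℕ → ℝ)
    (ht : ∀ m : ℕ, t m = m * h) (n : ℕ) :
    ∫ s in t 0..t n, cos ((t n - s) * ω) * g s =
      ∑ j ∈ range n,
        (cos (j * h * ω) *
            (∫ s in t (n - j - 1)..t (n - j), cos ((t (n - j) - s) * ω) * g s)
          - sin (j * h * ω) *
            ∫ s in t (n - j - 1)..t (n - j), sin ((t (n - j) - s) * ω) * g s) := by
  rw [integral_cos_sub_mul_eq_sum_adjacent ω t n fun _ _ => hg.intervalIntegrable _ _,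
    ← sum_range_reflect]
  refine sum_congr rfl fun j hj => ?_
  have hj : j < n := mem_range.mp hj
  have hlag : t n - t (n - j) = j * h := by
    rw [ht, ht, Nat.cast_sub hj.le]; ring
  rw [show n - 1 - j = n - j - 1 by omega, show n - j - 1 + 1 = n - j by omega, hlag]

end Convolution

section VariationOfConstants

variable {ω : ℝ} {g x : ℝ → ℝ}

theorem hasDerivAt_cos_mul_deriv_sub_sin_mul (hx : ContDiff ℝ 2 x)
    (hode : ∀ t : ℝ, deriv (deriv x) t = -ω ^ 2 * x t + g t) (b s : ℝ) :
    HasDerivAt (fun s => cos ((b - s) * ω) * deriv x s - ω * sin ((b - s) * ω) * x s)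
      (cos ((b - s) * ω) * g s) s := by
  have hx1 : HasDerivAt x (deriv x s) s :=
    (hx.differentiable (by norm_num) s).hasDerivAt
  have hx2 : HasDerivAt (deriv x) (deriv (deriv x) s) s :=
    ((hx.iterate_deriv' 1 1).differentiable (by norm_num) s).hasDerivAt
  have hangle : HasDerivAt (fun s : ℝ => (b - s) * ω) (-1 * ω) s :=
    ((hasDerivAt_id s).const_sub b).mul_const ω
  refine ((hangle.cos.mul hx2).sub ((hangle.sin.const_mul ω).mul hx1)).congr_deriv ?_
  rw [hode s]
  ring

theorem deriv_eq_add_integral_cos_sub_mul (hx : ContDiff ℝ 2 x)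
    (hode : ∀ t : ℝ, deriv (deriv x) t = -ω ^ 2 * x t + g t) (hg : Continuous g) (a b : ℝ) :
    deriv x b = -ω * sin ((b - a) * ω) * x a + cos ((b - a) * ω) * deriv x a
      + ∫ s in a..b, cos ((b - s) * ω) * g s := by
  have hint : Continuous fun s => cos ((b - s) * ω) * g s := by fun_prop
  rw [integral_eq_sub_of_hasDerivAt
    (fun s _ => hasDerivAt_cos_mul_deriv_sub_sin_mul hx hode b s) (hint.intervalIntegrable a b)]
  simp only [sub_self, zero_mul, cos_zero, sin_zero]
  ring

end VariationOfConstants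

theorem trig_scheme_velocity_error_bound_general
    (ω : ℝ) (g : ℝ → ℝ) (hg : Continuous g)
    (x : ℝ → ℝ) (hx : ContDiff ℝ 2 x)
    (hode : ∀ t : ℝ, deriv (deriv x) t = -ω ^ 2 * x t + g t)
    (h : ℝ) (hh : 0 < h) (t : ℕ → ℝ) (ht : ∀ m : ℕ, t m = m * h)
    (n : ℕ) (hn : 1 ≤ n) (T : ℝ) (hT : T = n * h)
    (QS QC δj : ℕ → ℝ)
    (hQS : ∀ j : ℕ, j < n →
      |QS j - ∫ s in (t (n - j - 1))..(t (n - j)), Real.sin ((t (n - j) - s) * ω) * g s|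
        ≤ δj j * h)
    (hQC : ∀ j : ℕ, j < n →
      |QC j - ∫ s in (t (n - j - 1))..(t (n - j)), Real.cos ((t (n - j) - s) * ω) * g s|
        ≤ δj j * h)
    (δ : ℝ)
    (hδ : δ = (Finset.range n).sup'
      (Finset.nonempty_range_iff.mpr (Nat.one_le_iff_ne_zero.mp hn)) δj)
    (V : ℝ)
    (hV : V = -ω * Real.sin (n * h * ω) * x 0 + Real.cos (n * h * ω) * deriv x 0
      + ∑ j ∈ Finset.range n,
          (-Real.sin (j * h * ω) * QS j + Real.cos (j * h * ω) * QC j)) :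
    |V - deriv x (t n)| ≤ 2 * δ * T := by
  have hexact := deriv_eq_add_integral_cos_sub_mul hx hode hg (t 0) (t n)
  rw [integral_cos_sub_mul_eq_sum_grid ω hg h t ht n] at hexact
  have hδj : ∀ j < n, δj j * h ≤ δ * h := fun j hj =>
    mul_le_mul_of_nonneg_right (hδ ▸ le_sup' δj (mem_range.mpr hj)) hh.le
  calc |V - deriv x (t n)|
      = |∑ j ∈ range n,
          (-sin (j * h * ω) *
              (QS j - ∫ s in t (n - j - 1)..t (n - j), sin ((t (n - j) - s) * ω) * g s)
            + cos (j * h * ω) *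
              (QC j - ∫ s in t (n - j - 1)..t (n - j), cos ((t (n - j) - s) * ω) * g s))| := by
        rw [hV, hexact, ht 0, ht n, Nat.cast_zero, zero_mul, sub_zero, add_sub_add_left_eq_sub,
          ← sum_sub_distrib]
        congr 1
        exact sum_congr rfl fun j _ => by ring
    _ ≤ ∑ j ∈ range n, (δ * h + δ * h) := by
        refine (abs_sum_le_sum_abs _ _).trans (sum_le_sum fun j hj => ?_)
        have hj : j < n := mem_range.mp hj
        exact (abs_neg_sin_mul_add_cos_mul_le _ _ _).trans
          (add_le_add ((hQS j hj).trans (hδj j hj)) ((hQC j hj).trans (hδj j hj)))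
    _ = 2 * δ * T := by
        rw [sum_const, card_range, nsmul_eq_mul, hT]
        ring

theorem trig_scheme_velocity_error_bound
    (ω : ℝ) (hω : 0 < ω) (g : ℝ → ℝ) (hg : Continuous g)
    (x : ℝ → ℝ) (hx : ContDiff ℝ 2 x)
    (hode : ∀ t : ℝ, deriv (deriv x) t = -ω ^ 2 * x t + g t)
    (h : ℝ) (hh : 0 < h) (t : ℕ → ℝ) (ht : ∀ m : ℕ, t m = m * h)
    (n : ℕ) (hn : 1 ≤ n) (T : ℝ) (hT : T = n * h)
    (QS QC δj : ℕ → ℝ)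
    (hQS : ∀ j : ℕ, j < n →
      |QS j - ∫ s in (t (n - j - 1))..(t (n - j)), Real.sin ((t (n - j) - s) * ω) * g s|
        ≤ δj j * h)
    (hQC : ∀ j : ℕ, j < n →
      |QC j - ∫ s in (t (n - j - 1))..(t (n - j)), Real.cos ((t (n - j) - s) * ω) * g s|
        ≤ δj j * h)
    (δ : ℝ)
    (hδ : δ = (Finset.range n).sup'
      (Finset.nonempty_range_iff.mpr (Nat.one_le_iff_ne_zero.mp hn)) δj)
    (V : ℝ)
    (hV : V = -ω * Real.sin (n * h * ω) * x 0 + Real.cos (n * h * ω) * deriv x 0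
      + ∑ j ∈ Finset.range n,
          (-Real.sin (j * h * ω) * QS j + Real.cos (j * h * ω) * QC j)) :
    |V - deriv x (t n)| ≤ 2 * δ * T :=
  trig_scheme_velocity_error_bound_general ω g hg x hx hode h hh t ht n hn T hT QS QC δj hQS hQC δ
    hδ V hV
end
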